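/- Let p ≥ 1 and ρ ≥ 0. Let J be a square quaternion matrix that is block diagonal (via blockDiagonal') of Jordan blocks J_{n_t}(λ_t), where each λ_t ∈ ℂ (regarded as a quaternion) satisfies |λ_t| = ρ and each block size satisfies n_t ≤ p. Let H be a quaternion matrix of the same size, let U_s, U_d be quaternion matrices with matching column dimension, and let η_s, η_d be quaternion vectors of matching dimension. Then there exists C > 0 such that for every k ≥ 2p: (a) ‖U_s·J^k·η_s‖₂ ≤ C·k^{p−1}·ρ^k, and (b) ‖U_d·J^k·η_s + U_s·J^k·η_d + U_s·(∑_{i=0}^{k−1} J^i·H·J^{k−1−i})·η_s‖₂ ≤ C·k^{2p−1}·ρ^{k−1}. (These are the 2-norms of the standard and dual parts of Û·(J + H·ε)^k·η̂ where Û = U_s + U_d·ε and η̂ = η_s + η_d·ε.) -/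

import Mathlib

local notation "ℍ" => Quaternion ℝ

/-- The `m × m` Jordan block with `l` on the diagonal and `1` on the superdiagonal. -/
def Jb {R : Type*} [Zero R] [One R] (m : ℕ) (l : R) : Matrix (Fin m) (Fin m) R :=
  Matrix.of fun i j =>
    if (j : ℕ) = (i : ℕ) then l else if (j : ℕ) = (i : ℕ) + 1 then 1 else 0

/-- The Euclidean 2-norm of a quaternion vector. -/
noncomputable def qnorm {ι : Type*} [Fintype ι] (u : ι → ℍ) : ℝ :=
  Real.sqrt (∑ i, ‖u i‖ ^ 2)

/-- Block diagonal matrix of Jordan blocks `J_{sz t}(lam t)` with complex eigenvalues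
regarded as quaternions. -/
noncomputable def jordanBlockDiag {T : ℕ} (sz : Fin T → ℕ) (lam : Fin T → ℂ) :
    Matrix ((t : Fin T) × Fin (sz t)) ((t : Fin T) × Fin (sz t)) ℍ :=
  Matrix.blockDiagonal' fun t => Jb (sz t) (⟨(lam t).re, (lam t).im, 0, 0⟩ : ℍ)

/-!
Write `J = D + S` with `D` diagonal, its entries of modulus `ρ`, and `S` the block-diagonal shift,
which commutes with `D` and satisfies `S ^ p = 0` because every block has size at most `p`.
The binomial expansion of `(D + S) ^ k` then has at most `p` nonzero terms, so for `ρ > 0`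
we get `‖J ^ k‖ ≤ C (k + 1) ^ (p - 1) ρ ^ k`; each of the `k` terms `J ^ i H J ^ (k - 1 - i)`
of the dual part is therefore `O(k ^ (2p - 2) ρ ^ (k - 1))`. For `ρ = 0` the matrix `J` itself
satisfies `J ^ p = 0`, and once `k ≥ 2p` every term of the sum has a factor `J ^ i` with `i ≥ p`,
so both sides vanish. Norms are computed in the `∞`-operator norm, which bounds the Euclidean
norm of a vector in `ℍ ^ N` up to the factor `√N`.
-/

open Matrix Finset

section NormedRing

variable {R : Type*}

theorem Commute.add_pow_eq_sum_range_of_pow_eq_zero [Semiring R] {D N : R} (h : Commute D N)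
    {p : ℕ} (hN : N ^ p = 0) (k : ℕ) :
    (D + N) ^ k = ∑ j ∈ range p, k.choose j • (D ^ (k - j) * N ^ j) := by
  have hvanish : ∀ j, k < j ∨ p ≤ j → k.choose j • (D ^ (k - j) * N ^ j) = 0 := by
    rintro j (hj | hj)
    · rw [Nat.choose_eq_zero_of_lt hj, zero_smul]
    · rw [pow_eq_zero_of_le hj hN, mul_zero, smul_zero]
  have hbinom : (D + N) ^ k = ∑ j ∈ range (k + 1), k.choose j • (D ^ (k - j) * N ^ j) := by
    rw [add_comm, h.symm.add_pow]
    refine sum_congr rfl fun j _ => ?_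
    rw [nsmul_eq_mul', (h.pow_pow _ _).symm.eq]
  rw [hbinom, sum_subset (range_subset_range.2 (Nat.le_add_right (k + 1) p)),
    ← sum_subset (range_subset_range.2 (Nat.le_add_left p (k + 1)))] <;>
  · intro j hj hj'
    simp only [mem_range] at hj hj'
    exact hvanish j (by omega)

theorem Commute.norm_add_pow_le [NormedRing R] {D N : R} (h : Commute D N) {p : ℕ}
    (hN : N ^ p = 0) {ρ : ℝ} (hρ : 0 < ρ) (hD : ∀ m, ‖D ^ m‖ ≤ ρ ^ m) (k : ℕ) :
    ‖(D + N) ^ k‖ ≤ (∑ j ∈ range p, ρ⁻¹ ^ j * ‖N ^ j‖) * ((k + 1) ^ (p - 1) * ρ ^ k) := by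
  rw [h.add_pow_eq_sum_range_of_pow_eq_zero hN, sum_mul]
  refine (norm_sum_le _ _).trans (sum_le_sum fun j hj => ?_)
  rcases lt_or_ge k j with hkj | hjk
  · rw [Nat.choose_eq_zero_of_lt hkj, zero_smul, norm_zero]
    positivity
  have hchoose : (k.choose j : ℝ) ≤ (k + 1) ^ (p - 1) := by
    have := mem_range.1 hj
    calc (k.choose j : ℝ) ≤ (k : ℝ) ^ j := by exact_mod_cast Nat.choose_le_pow k j
      _ ≤ (k + 1) ^ j := by gcongr; linarith
      _ ≤ (k + 1) ^ (p - 1) := pow_le_pow_right₀ (by linarith [k.cast_nonneg (α := ℝ)]) (by omega)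
  have hDpow : ‖D ^ (k - j)‖ ≤ ρ⁻¹ ^ j * ρ ^ k := by
    rw [inv_pow, mul_comm, ← pow_sub₀ ρ hρ.ne' hjk]
    exact hD _
  calc ‖k.choose j • (D ^ (k - j) * N ^ j)‖
      ≤ k.choose j * (‖D ^ (k - j)‖ * ‖N ^ j‖) :=
        norm_nsmul_le.trans (by gcongr; exact norm_mul_le _ _)
    _ ≤ (k + 1) ^ (p - 1) * ((ρ⁻¹ ^ j * ρ ^ k) * ‖N ^ j‖) := by gcongr
    _ = ρ⁻¹ ^ j * ‖N ^ j‖ * ((k + 1) ^ (p - 1) * ρ ^ k) := by ring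

theorem sum_pow_mul_mul_pow_eq_zero [Semiring R] {J : R} (H : R) {p k : ℕ} (hJ : J ^ p = 0)
    (hk : 2 * p ≤ k) : ∑ i ∈ range k, J ^ i * H * J ^ (k - 1 - i) = 0 := by
  refine sum_eq_zero fun i hi => ?_
  rcases le_or_gt p i with hpi | hip
  · rw [pow_eq_zero_of_le hpi hJ, zero_mul, zero_mul]
  · have := mem_range.1 hi
    rw [pow_eq_zero_of_le (n := k - 1 - i) (by omega) hJ, mul_zero]

theorem norm_sum_pow_mul_mul_pow_le [NormedRing R] {J : R} (H : R) {C ρ : ℝ} {q : ℕ}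
    (hρ : 0 ≤ ρ) (hJ : ∀ k : ℕ, ‖J ^ k‖ ≤ C * ((k + 1) ^ q * ρ ^ k)) (k : ℕ) :
    ‖∑ i ∈ range k, J ^ i * H * J ^ (k - 1 - i)‖ ≤
      C ^ 2 * ‖H‖ * (k ^ (2 * q + 1) * ρ ^ (k - 1)) := by
  have hC : 0 ≤ C := by simpa using (norm_nonneg _).trans (hJ 0)
  have hterm : ∀ i ∈ range k,
      ‖J ^ i * H * J ^ (k - 1 - i)‖ ≤ C ^ 2 * ‖H‖ * (k ^ (2 * q) * ρ ^ (k - 1)) := by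
    intro i hi
    have hik := mem_range.1 hi
    have hi : (i : ℝ) + 1 ≤ k := by exact_mod_cast hik
    have hki : ((k - 1 - i : ℕ) : ℝ) + 1 ≤ k := by exact_mod_cast (by omega : k - 1 - i + 1 ≤ k)
    calc ‖J ^ i * H * J ^ (k - 1 - i)‖ ≤ ‖J ^ i‖ * ‖H‖ * ‖J ^ (k - 1 - i)‖ :=
          (norm_mul_le _ _).trans (by gcongr; exact norm_mul_le _ _)
      _ ≤ C * ((i + 1) ^ q * ρ ^ i) * ‖H‖ *
            (C * (((k - 1 - i : ℕ) : ℝ) + 1) ^ q * ρ ^ (k - 1 - i)) := by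
          gcongr
          · exact hJ i
          · simpa [mul_assoc] using hJ (k - 1 - i)
      _ ≤ C * (k ^ q * ρ ^ i) * ‖H‖ * (C * (k : ℝ) ^ q * ρ ^ (k - 1 - i)) := by gcongr
      _ = C ^ 2 * ‖H‖ * (k ^ (2 * q) * ρ ^ (i + (k - 1 - i))) := by ring
      _ = C ^ 2 * ‖H‖ * (k ^ (2 * q) * ρ ^ (k - 1)) := by rw [Nat.add_sub_cancel' (by omega)]
  calc ‖∑ i ∈ range k, J ^ i * H * J ^ (k - 1 - i)‖
      ≤ ∑ i ∈ range k, C ^ 2 * ‖H‖ * (k ^ (2 * q) * ρ ^ (k - 1)) :=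
        (norm_sum_le _ _).trans (sum_le_sum hterm)
    _ = C ^ 2 * ‖H‖ * (k ^ (2 * q + 1) * ρ ^ (k - 1)) := by
        rw [sum_const, card_range, nsmul_eq_mul]; ring

theorem exists_norm_pow_le_and_norm_sum_pow_mul_mul_pow_le [NormedRing R] {J : R} (H : R)
    {C ρ : ℝ} {q : ℕ} (hρ : 0 ≤ ρ) (hJ : ∀ k : ℕ, ‖J ^ k‖ ≤ C * ((k + 1) ^ q * ρ ^ k)) :
    ∃ K ≥ 0, ∀ k : ℕ, 1 ≤ k →
      ‖J ^ k‖ ≤ K * (k ^ q * ρ ^ k) ∧ ‖J ^ k‖ ≤ K * (k ^ (2 * q + 1) * ρ ^ (k - 1)) ∧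
        ‖∑ i ∈ range k, J ^ i * H * J ^ (k - 1 - i)‖ ≤ K * (k ^ (2 * q + 1) * ρ ^ (k - 1)) := by
  have hC : 0 ≤ C := by simpa using (norm_nonneg _).trans (hJ 0)
  have h₁ : 0 ≤ C * 2 ^ q := by positivity
  have h₂ : 0 ≤ C * 2 ^ q * ρ := by positivity
  have h₃ : 0 ≤ C ^ 2 * ‖H‖ := by positivity
  refine ⟨C * 2 ^ q + C * 2 ^ q * ρ + C ^ 2 * ‖H‖, by positivity, fun k hk => ?_⟩
  have hk1 : (1 : ℝ) ≤ k := by exact_mod_cast hk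
  have hJk : ‖J ^ k‖ ≤ C * 2 ^ q * (k ^ q * ρ ^ k) :=
    calc ‖J ^ k‖ ≤ C * ((k + 1) ^ q * ρ ^ k) := hJ k
      _ ≤ C * ((2 * k) ^ q * ρ ^ k) := by gcongr; linarith
      _ = C * 2 ^ q * (k ^ q * ρ ^ k) := by ring
  have hρk : (k : ℝ) ^ q * ρ ^ k ≤ ρ * (k ^ (2 * q + 1) * ρ ^ (k - 1)) :=
    calc (k : ℝ) ^ q * ρ ^ k ≤ k ^ (2 * q + 1) * ρ ^ (k - 1 + 1) := by
          rw [Nat.sub_add_cancel hk]; gcongr ?_ * _; exact pow_le_pow_right₀ hk1 (by omega)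
      _ = ρ * (k ^ (2 * q + 1) * ρ ^ (k - 1)) := by ring
  refine ⟨hJk.trans (by gcongr; linarith), ?_,
    (norm_sum_pow_mul_mul_pow_le H hρ hJ k).trans (by gcongr; linarith)⟩
  calc ‖J ^ k‖ ≤ C * 2 ^ q * ρ * (k ^ (2 * q + 1) * ρ ^ (k - 1)) := by
        rw [mul_assoc _ ρ]; exact hJk.trans (by gcongr)
    _ ≤ _ := by gcongr; linarith

end NormedRing

section JordanBlock

variable {R : Type*}

theorem Jb_eq_diagonal_add_Jb_zero [AddZeroClass R] [One R] (m : ℕ) (l : R) :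
    Jb m l = diagonal (fun _ => l) + Jb m 0 := by
  ext i j
  simp only [Jb, of_apply, Matrix.add_apply, diagonal_apply, Fin.ext_iff]
  split_ifs <;> first | omega | simp

theorem commute_diagonal_Jb_zero [Semiring R] (m : ℕ) (l : R) :
    Commute (diagonal fun _ : Fin m => l) (Jb m 0) := by
  ext i j
  simp only [diagonal_mul, mul_diagonal, Jb, of_apply]
  split_ifs <;> simp

theorem Jb_zero_pow_apply_eq_zero [Semiring R] {m : ℕ} :
    ∀ (d : ℕ) {i j : Fin m}, (j : ℕ) < i + d → (Jb m (0 : R) ^ d) i j = 0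
  | 0, i, j, h => one_apply_ne (by rintro rfl; omega)
  | d + 1, i, j, h => by
    rw [pow_succ, mul_apply]
    refine sum_eq_zero fun l _ => ?_
    by_cases hl : (j : ℕ) = l + 1
    · rw [Jb_zero_pow_apply_eq_zero d (by omega), zero_mul]
    · simp [Jb, hl]

theorem Jb_zero_pow_eq_zero [Semiring R] {m p : ℕ} (h : m ≤ p) : Jb m (0 : R) ^ p = 0 :=
  ext fun _ _ => Jb_zero_pow_apply_eq_zero p (by omega)

theorem commute_diagonal_blockDiagonal'_Jb_zero {o : Type*} [Fintype o] [DecidableEq o]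
    [Semiring R] (sz : o → ℕ) (c : o → R) :
    Commute (diagonal fun x : (t : o) × Fin (sz t) => c x.1)
      (blockDiagonal' fun t => Jb (sz t) (0 : R)) := by
  rw [← blockDiagonal'_diagonal fun t (_ : Fin (sz t)) => c t]
  simp only [Commute, SemiconjBy, ← blockDiagonal'_mul]
  exact congrArg _ (funext fun t => (commute_diagonal_Jb_zero _ _).eq)

theorem blockDiagonal'_Jb_zero_pow_eq_zero {o : Type*} [Fintype o] [DecidableEq o] [Semiring R]
    {sz : o → ℕ} {p : ℕ} (hsz : ∀ t, sz t ≤ p) :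
    (blockDiagonal' fun t => Jb (sz t) (0 : R)) ^ p = 0 := by
  rw [← blockDiagonal'_pow,
    show (fun t => Jb (sz t) (0 : R)) ^ p = 0 from funext fun t => Jb_zero_pow_eq_zero (hsz t),
    blockDiagonal'_zero]

end JordanBlock

theorem jordanBlockDiag_eq_diagonal_add {T : ℕ} (sz : Fin T → ℕ) (lam : Fin T → ℂ) :
    jordanBlockDiag sz lam =
      diagonal (fun x => (lam x.1 : ℍ)) + blockDiagonal' fun t => Jb (sz t) (0 : ℍ) := by
  rw [jordanBlockDiag, ← blockDiagonal'_diagonal fun t (_ : Fin (sz t)) => (lam t : ℍ),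
    ← blockDiagonal'_add]
  exact congrArg _ (funext fun t => Jb_eq_diagonal_add_Jb_zero _ _)

theorem Quaternion.norm_coeComplex (z : ℂ) : ‖(z : ℍ)‖ = ‖z‖ := by
  rw [norm_eq_sqrt_real_inner, Quaternion.inner_self, Complex.norm_def]
  congr 1
  simp [Quaternion.normSq_def', Complex.normSq_apply]
  ring

theorem qnorm_le_sqrt_card_mul_norm {ι : Type*} [Fintype ι] (u : ι → ℍ) :
    qnorm u ≤ √(Fintype.card ι) * ‖u‖ := by
  rw [qnorm, ← Real.sqrt_sq (norm_nonneg u), ← Real.sqrt_mul (Nat.cast_nonneg _)]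
  gcongr
  calc ∑ i, ‖u i‖ ^ 2 ≤ ∑ _i : ι, ‖u‖ ^ 2 :=
        sum_le_sum fun i _ => by gcongr; exact norm_le_pi_norm u i
    _ = Fintype.card ι * ‖u‖ ^ 2 := by rw [sum_const, card_univ, nsmul_eq_mul]

attribute [local instance] Matrix.linftyOpNormedAddCommGroup Matrix.linftyOpNormedRing

theorem norm_mul_mulVec_le {α l m n : Type*} [NormedRing α] [Fintype l] [Fintype m] [Fintype n]
    (U : Matrix l m α) (A : Matrix m n α) (η : n → α) : ‖(U * A) *ᵥ η‖ ≤ ‖U‖ * ‖η‖ * ‖A‖ :=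
  calc ‖(U * A) *ᵥ η‖ ≤ ‖U * A‖ * ‖η‖ := linfty_opNorm_mulVec _ _
    _ ≤ ‖U‖ * ‖A‖ * ‖η‖ := by gcongr; exact linfty_opNorm_mul _ _
    _ = ‖U‖ * ‖η‖ * ‖A‖ := by ring

theorem norm_diagonal_coeComplex_pow_le {ι : Type*} [Fintype ι] [DecidableEq ι] {lam : ι → ℂ}
    {ρ : ℝ} (hρ : 0 ≤ ρ) (hlam : ∀ i, ‖lam i‖ = ρ) (m : ℕ) :
    ‖diagonal (fun i => (lam i : ℍ)) ^ m‖ ≤ ρ ^ m := by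
  rw [diagonal_pow, linfty_opNorm_diagonal]
  refine (pi_norm_le_iff_of_nonneg (by positivity)).2 fun i => ?_
  rw [Pi.pow_apply, norm_pow, Quaternion.norm_coeComplex, hlam]

theorem exists_dual_bounds_of_norm_pow_le {m n : Type*} [Fintype m] [Fintype n] [DecidableEq n]
    {J : Matrix n n ℍ} (H : Matrix n n ℍ) (Us Ud : Matrix m n ℍ) (ηs ηd : n → ℍ) {C ρ : ℝ}
    {q : ℕ} (hρ : 0 ≤ ρ) (hJ : ∀ k : ℕ, ‖J ^ k‖ ≤ C * ((k + 1) ^ q * ρ ^ k)) :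
    ∃ C' > (0 : ℝ), ∀ k : ℕ, 1 ≤ k →
      qnorm ((Us * J ^ k) *ᵥ ηs) ≤ C' * k ^ q * ρ ^ k ∧
        qnorm ((Ud * J ^ k) *ᵥ ηs + (Us * J ^ k) *ᵥ ηd +
            (Us * ∑ i ∈ range k, J ^ i * H * J ^ (k - 1 - i)) *ᵥ ηs) ≤
          C' * k ^ (2 * q + 1) * ρ ^ (k - 1) := by
  obtain ⟨K, hK, hbound⟩ := exists_norm_pow_le_and_norm_sum_pow_mul_mul_pow_le H hρ hJ
  set B := ‖Us‖ * ‖ηs‖ + ‖Ud‖ * ‖ηs‖ + ‖Us‖ * ‖ηd‖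
  set A := √(Fintype.card m) * B * K
  refine ⟨A + 1, by positivity, fun k hk => ?_⟩
  obtain ⟨hJe, hJf, hsum⟩ := hbound k hk
  set e : ℝ := k ^ q * ρ ^ k
  set f : ℝ := k ^ (2 * q + 1) * ρ ^ (k - 1)
  have hB : ‖Us‖ * ‖ηs‖ ≤ B := by
    have : 0 ≤ ‖Ud‖ * ‖ηs‖ + ‖Us‖ * ‖ηd‖ := by positivity
    linarith
  constructor
  · calc qnorm ((Us * J ^ k) *ᵥ ηs) ≤ √(Fintype.card m) * (‖Us‖ * ‖ηs‖ * ‖J ^ k‖) :=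
          (qnorm_le_sqrt_card_mul_norm _).trans (by gcongr; exact norm_mul_mulVec_le _ _ _)
      _ ≤ √(Fintype.card m) * (B * (K * e)) := by gcongr
      _ ≤ (A + 1) * e := by
          linarith [show √(Fintype.card m) * (B * (K * e)) = A * e by ring,
            show 0 ≤ e by positivity]
      _ = (A + 1) * k ^ q * ρ ^ k := by ring
  · calc _ ≤ √(Fintype.card m) * (‖Ud‖ * ‖ηs‖ * ‖J ^ k‖ + ‖Us‖ * ‖ηd‖ * ‖J ^ k‖ +
            ‖Us‖ * ‖ηs‖ * ‖∑ i ∈ range k, J ^ i * H * J ^ (k - 1 - i)‖) := by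
          refine (qnorm_le_sqrt_card_mul_norm _).trans
            (mul_le_mul_of_nonneg_left ?_ (by positivity))
          refine (norm_add₃_le ..).trans ?_
          gcongr <;> exact norm_mul_mulVec_le _ _ _
      _ ≤ √(Fintype.card m) * (B * (K * f)) := by
          rw [show B * (K * f) = ‖Ud‖ * ‖ηs‖ * (K * f) + ‖Us‖ * ‖ηd‖ * (K * f) +
            ‖Us‖ * ‖ηs‖ * (K * f) by ring]
          gcongr
      _ ≤ (A + 1) * f := by
          linarith [show √(Fintype.card m) * (B * (K * f)) = A * f by ring,
            show 0 ≤ f by positivity]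
      _ = (A + 1) * k ^ (2 * q + 1) * ρ ^ (k - 1) := by ring

theorem stmt11 {T N : ℕ} (p : ℕ) (hp : 1 ≤ p) (ρ : ℝ) (hρ : 0 ≤ ρ)
    (sz : Fin T → ℕ) (lam : Fin T → ℂ)
    (hlam : ∀ t, ‖lam t‖ = ρ) (hsz : ∀ t, sz t ≤ p)
    (H : Matrix ((t : Fin T) × Fin (sz t)) ((t : Fin T) × Fin (sz t)) ℍ)
    (Us Ud : Matrix (Fin N) ((t : Fin T) × Fin (sz t)) ℍ)
    (ηs ηd : ((t : Fin T) × Fin (sz t)) → ℍ) :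
    ∃ C > (0 : ℝ), ∀ k : ℕ, 2 * p ≤ k →
      qnorm ((Us * jordanBlockDiag sz lam ^ k).mulVec ηs) ≤
          C * (k : ℝ) ^ (p - 1) * ρ ^ k ∧
        qnorm ((Ud * jordanBlockDiag sz lam ^ k).mulVec ηs +
            (Us * jordanBlockDiag sz lam ^ k).mulVec ηd +
            (Us * ∑ i ∈ Finset.range k,
              jordanBlockDiag sz lam ^ i * H * jordanBlockDiag sz lam ^ (k - 1 - i)).mulVec ηs) ≤
          C * (k : ℝ) ^ (2 * p - 1) * ρ ^ (k - 1) := by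
  set D := diagonal fun x : (t : Fin T) × Fin (sz t) => (lam x.1 : ℍ)
  set S := blockDiagonal' fun t => Jb (sz t) (0 : ℍ)
  have hJ : jordanBlockDiag sz lam = D + S := jordanBlockDiag_eq_diagonal_add sz lam
  have hS : S ^ p = 0 := blockDiagonal'_Jb_zero_pow_eq_zero hsz
  have hD : ∀ m, ‖D ^ m‖ ≤ ρ ^ m := norm_diagonal_coeComplex_pow_le hρ fun x => hlam x.1
  rcases hρ.eq_or_lt with rfl | hρ
  · have hJp : jordanBlockDiag sz lam ^ p = 0 := by
      rwa [hJ, (norm_le_zero_iff.1 (by simpa using hD 1) : D = 0), zero_add]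
    refine ⟨1, one_pos, fun k hk => ?_⟩
    rw [pow_eq_zero_of_le (by omega) hJp, sum_pow_mul_mul_pow_eq_zero H hJp hk,
      zero_pow (by omega), zero_pow (by omega)]
    simp [qnorm]
  · have hpow := (commute_diagonal_blockDiagonal'_Jb_zero sz fun t => (lam t : ℍ)).norm_add_pow_le
      hS hρ hD
    rw [← hJ] at hpow
    obtain ⟨C, hC, hbound⟩ := exists_dual_bounds_of_norm_pow_le H Us Ud ηs ηd hρ.le hpow
    refine ⟨C, hC, fun k hk => ?_⟩
    rw [show 2 * p - 1 = 2 * (p - 1) + 1 by omega]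
    exact hbound k (by omega)
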